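/- arXiv:2102.04019 — 2 statements merged into one kernel-verified Lean document; each statement's English description precedes it below -/
import Mathlib

section
/- D(c₀) = 1: in the space c₀, the supremum of liminf_n ‖x_n − x‖_∞ over all sequences with ‖x_n‖_∞ = 1 and x_n ⇀ x weakly equals 1. -/
open Filter Topology

/-- Weak convergence of a sequence in a real normed space. -/
def WeakConv {X : Type*} [NormedAddCommGroup X] [NormedSpace ℝ X]
    (x : ℕ → X) (a : X) : Prop :=
  ∀ f : X →L[ℝ] ℝ, Tendsto (fun n => f (x n)) atTop (𝓝 (f a))

/-- The modulus D(X). -/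
noncomputable def Dmod (X : Type*) [NormedAddCommGroup X] [NormedSpace ℝ X] : ℝ :=
  sSup {d : ℝ | ∃ (x : ℕ → X) (a : X), (∀ n, ‖x n‖ = 1) ∧ WeakConv x a ∧
    d = Filter.liminf (fun n => ‖x n - a‖) atTop}

/-- The modulus D̂(X). -/
noncomputable def Dhat (X : Type*) [NormedAddCommGroup X] [NormedSpace ℝ X] : ℝ :=
  sSup {d : ℝ | ∃ (x : ℕ → X) (a : X), (∀ n, ‖x n‖ = 1) ∧ WeakConv x a ∧ d = ‖a‖}

/-- Opial modulus r_X(c). -/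
noncomputable def opialMod (X : Type*) [NormedAddCommGroup X] [NormedSpace ℝ X] (c : ℝ) : ℝ :=
  sInf {r : ℝ | ∃ (x : ℕ → X) (a : X), ‖a‖ ≥ c ∧ WeakConv x 0 ∧
    Filter.liminf (fun n => ‖x n‖) atTop ≥ 1 ∧
    r = Filter.liminf (fun n => ‖x n - a‖) atTop - 1}

/-!
Weak convergence in `c₀` forces coordinatewise convergence, and the weak limit `a` is `ε`-small
off finitely many coordinates; hence `‖xₙ - a‖ ≤ 1 + ε` for large `n`, so `D(c₀) ≤ 1`. The unit
vectors `eₙ` attain the bound, since all signed sums `∑ ±eₙ` have norm at most `1`, which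
forces `eₙ ⇀ 0`.
-/

open ZeroAtInfty

lemma abs_coe_sign_le_one (r : ℝ) : |(SignType.sign r : ℝ)| ≤ 1 := by
  rcases SignType.sign r with _ | _ | _ <;> simp

/-- Choosing the signs of `f xₙ` gives `∑ |f xₙ| ≤ C ‖f‖`, so `f xₙ → 0`. -/
theorem weakConv_zero_of_norm_sum_smul_le {X : Type*} [NormedAddCommGroup X] [NormedSpace ℝ X]
    (x : ℕ → X) (C : ℝ)
    (hC : ∀ (S : Finset ℕ) (c : ℕ → ℝ), (∀ n, |c n| ≤ 1) → ‖∑ n ∈ S, c n • x n‖ ≤ C) :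
    WeakConv x 0 := by
  intro f
  have hsum : ∀ S : Finset ℕ, ∑ n ∈ S, |f (x n)| ≤ ‖f‖ * C := fun S =>
    calc ∑ n ∈ S, |f (x n)| = f (∑ n ∈ S, (SignType.sign (f (x n)) : ℝ) • x n) := by
          simp only [map_sum, map_smul, smul_eq_mul, sign_mul_self]
      _ ≤ ‖f‖ * ‖∑ n ∈ S, (SignType.sign (f (x n)) : ℝ) • x n‖ :=
          (Real.le_norm_self _).trans (f.le_opNorm _)
      _ ≤ ‖f‖ * C := by
          gcongr
          exact hC S _ fun n => abs_coe_sign_le_one _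
  have hlim := (summable_of_sum_le (fun n => abs_nonneg _) hsum).tendsto_atTop_zero
  simpa using squeeze_zero_norm (fun n => le_of_eq (Real.norm_eq_abs _)) hlim

namespace ZeroAtInftyContinuousMap

variable {α β : Type*} [TopologicalSpace α] [NormedAddCommGroup β]

lemma norm_apply_le (f : C₀(α, β)) (x : α) : ‖f x‖ ≤ ‖f‖ :=
  f.toBCF.norm_coe_le_norm x

lemma norm_le_of_forall_norm_apply_le {f : C₀(α, β)} {C : ℝ} (hC : 0 ≤ C)
    (h : ∀ x, ‖f x‖ ≤ C) : ‖f‖ ≤ C :=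
  (BoundedContinuousFunction.norm_le hC).2 h

variable (𝕜 : Type*) [NormedField 𝕜] [NormedSpace 𝕜 β]

noncomputable def evalCLM (x : α) : C₀(α, β) →L[𝕜] β :=
  LinearMap.mkContinuous
    { toFun := fun f => f x
      map_add' := fun _ _ => rfl
      map_smul' := fun _ _ => rfl }
    1 fun f => by rw [one_mul]; exact f.norm_apply_le x

@[simp]
lemma evalCLM_apply (x : α) (f : C₀(α, β)) : evalCLM 𝕜 x f = f x := rfl

end ZeroAtInftyContinuousMap

open ZeroAtInftyContinuousMap

lemma WeakConv.tendsto_apply {α : Type*} [TopologicalSpace α] {x : ℕ → C₀(α, ℝ)}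
    {a : C₀(α, ℝ)} (h : WeakConv x a) (k : α) :
    Tendsto (fun n => x n k) atTop (𝓝 (a k)) :=
  h (evalCLM ℝ k)

noncomputable def stdBasis (n : ℕ) : C₀(ℕ, ℝ) where
  toFun k := if k = n then 1 else 0
  continuous_toFun := continuous_of_discreteTopology
  zero_at_infty' := by
    rw [cocompact_eq_atTop]
    refine tendsto_const_nhds.congr' ?_
    filter_upwards [eventually_gt_atTop n] with k hk
    rw [if_neg hk.ne']

lemma stdBasis_apply (n k : ℕ) : stdBasis n k = if k = n then 1 else 0 := rfl

lemma norm_sum_smul_stdBasis_le (S : Finset ℕ) {c : ℕ → ℝ} (hc : ∀ n, |c n| ≤ 1) :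
    ‖∑ n ∈ S, c n • stdBasis n‖ ≤ 1 := by
  refine norm_le_of_forall_norm_apply_le zero_le_one fun k => ?_
  have hk : (∑ n ∈ S, c n • stdBasis n) k = if k ∈ S then c k else 0 := by
    rw [← evalCLM_apply ℝ, map_sum]
    simp [stdBasis_apply]
  rw [hk]
  split_ifs
  · exact hc k
  · simp

lemma norm_stdBasis (n : ℕ) : ‖stdBasis n‖ = 1 := by
  refine le_antisymm ?_ ?_
  · simpa using norm_sum_smul_stdBasis_le {n} (c := 1) fun _ => by simp
  · simpa [stdBasis_apply] using (stdBasis n).norm_apply_le n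

lemma weakConv_stdBasis : WeakConv stdBasis 0 :=
  weakConv_zero_of_norm_sum_smul_le _ 1 fun S _ hc => norm_sum_smul_stdBasis_le S hc

/-- `a` is `ε`-small off finitely many coordinates, and on those `x n → a`. -/
lemma eventually_norm_sub_le_add {x : ℕ → C₀(ℕ, ℝ)} {a : C₀(ℕ, ℝ)} {r ε : ℝ}
    (hx : ∀ n, ‖x n‖ ≤ r) (hxa : ∀ k, Tendsto (fun n => x n k) atTop (𝓝 (a k)))
    (hε : 0 < ε) : ∀ᶠ n in atTop, ‖x n - a‖ ≤ r + ε := by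
  have ha : Tendsto a atTop (𝓝 0) := by simpa [cocompact_eq_atTop] using a.zero_at_infty'
  obtain ⟨N, hN⟩ := (ha.eventually (Metric.closedBall_mem_nhds 0 hε)).exists_forall_of_atTop
  have hclose : ∀ᶠ n in atTop, ∀ k ∈ Finset.range N, ‖x n k - a k‖ ≤ ε := by
    rw [eventually_all_finset]
    intro k _
    simpa [dist_eq_norm] using (hxa k).eventually (Metric.closedBall_mem_nhds (a k) hε)
  have hr : 0 ≤ r := (norm_nonneg _).trans (hx 0)
  filter_upwards [hclose] with n hn
  refine norm_le_of_forall_norm_apply_le (by positivity) fun k => ?_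
  rw [ZeroAtInftyContinuousMap.sub_apply]
  by_cases hk : k < N
  · exact (hn k (Finset.mem_range.2 hk)).trans (le_add_of_nonneg_left hr)
  · calc ‖x n k - a k‖ ≤ ‖x n k‖ + ‖a k‖ := norm_sub_le _ _
      _ ≤ r + ε := add_le_add ((x n).norm_apply_le k |>.trans (hx n))
          (by simpa using hN k (not_lt.1 hk))

lemma liminf_norm_sub_le_of_weakConv {x : ℕ → C₀(ℕ, ℝ)} {a : C₀(ℕ, ℝ)} {r : ℝ}
    (hx : ∀ n, ‖x n‖ ≤ r) (hw : WeakConv x a) :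
    liminf (fun n => ‖x n - a‖) atTop ≤ r :=
  le_of_forall_pos_le_add fun _ hε =>
    liminf_le_of_frequently_le (eventually_norm_sub_le_add hx hw.tendsto_apply hε).frequently
      (isBoundedUnder_of ⟨0, fun _ => norm_nonneg _⟩)

open ZeroAtInfty in
theorem stmt7 : Dmod C₀(ℕ, ℝ) = 1 := by
  refine IsGreatest.csSup_eq ⟨⟨stdBasis, 0, norm_stdBasis, weakConv_stdBasis, ?_⟩, ?_⟩
  · simp [norm_stdBasis]
  · rintro d ⟨x, a, hx, hw, rfl⟩
    exact liminf_norm_sub_le_of_weakConv (fun n => (hx n).le) hw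
end

section
/- Let X be a Banach space, (x_n) a sequence with x_n ⇀ 0 weakly, liminf_n ‖x_n‖ ≥ 1, and x ∈ X with ‖x‖ ≥ 1. If D(X) > 0, then liminf_n ‖x_n + x‖ ≥ 1/D(X). -/
/-!
Since `x n + a ⇀ a` and the norm is weakly lower semicontinuous,
`liminf ‖x n + a‖ ≥ ‖a‖ ≥ 1`. On the other hand `D(X) ≥ 1` as soon as `D(X) > 0`: a witness
`y n ⇀ b` with `liminf ‖y n - b‖ > 0` normalizes, after dropping finitely many terms, to a
weakly null sequence on the unit sphere, which contributes the value `1` to the supremum.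
Hence `1 / D(X) ≤ 1`.
-/

open Filter Topology

namespace WeakConv

variable {X : Type*} [NormedAddCommGroup X] [NormedSpace ℝ X] {x : ℕ → X} {a : X}

/-- Uniform boundedness applied to the `x n` as functionals on the (always complete) dual. -/
lemma exists_norm_le (hw : WeakConv x a) : ∃ C, ∀ n, ‖x n‖ ≤ C := by
  obtain ⟨C, hC⟩ := banach_steinhaus (g := fun n => NormedSpace.inclusionInDoubleDual ℝ X (x n))
    fun f => by
      obtain ⟨M, hM⟩ := (hw f).norm.bddAbove_range
      exact ⟨M, fun n => hM ⟨n, rfl⟩⟩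
  exact ⟨C, fun n => (NormedSpace.inclusionInDoubleDualLi ℝ).norm_map (x n) ▸ hC n⟩

lemma add_const (hw : WeakConv x a) (b : X) : WeakConv (fun n => x n + b) (a + b) := fun f => by
  simpa only [map_add] using (hw f).add_const (f b)

lemma sub_const (hw : WeakConv x a) (b : X) : WeakConv (fun n => x n - b) (a - b) := fun f => by
  simpa only [map_sub] using (hw f).sub_const (f b)

lemma comp_add (hw : WeakConv x a) (N : ℕ) : WeakConv (fun n => x (n + N)) a := fun f =>
  (hw f).comp (tendsto_add_atTop_nat N)

lemma smul_of_isBoundedUnder (hw : WeakConv x 0) {c : ℕ → ℝ}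
    (hc : IsBoundedUnder (· ≤ ·) atTop fun n => ‖c n‖) : WeakConv (fun n => c n • x n) 0 :=
  fun f => by
    simpa only [map_smul, smul_eq_mul, map_zero] using
      isBoundedUnder_le_mul_tendsto_zero hc (by simpa only [map_zero] using hw f)

lemma norm_le_liminf_norm (hw : WeakConv x a) : ‖a‖ ≤ liminf (fun n => ‖x n‖) atTop := by
  obtain ⟨g, hg, hga⟩ := exists_dual_vector'' ℝ a
  obtain ⟨C, hC⟩ := hw.exists_norm_le
  calc ‖a‖ = liminf (fun n => g (x n)) atTop := by rw [(hw g).liminf_eq, hga]; rfl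
    _ ≤ liminf (fun n => ‖x n‖) atTop :=
      liminf_le_liminf
        (Eventually.of_forall fun n =>
          (le_abs_self _).trans ((g.le_opNorm _).trans (mul_le_of_le_one_left (norm_nonneg _) hg)))
        (hw g).isBoundedUnder_ge (isCoboundedUnder_ge_of_le atTop hC)

lemma exists_unit_weakConv_zero {u : ℕ → X} (hw : WeakConv u 0)
    (hu : 0 < liminf (fun n => ‖u n‖) atTop) :
    ∃ z : ℕ → X, (∀ n, ‖z n‖ = 1) ∧ WeakConv z 0 := by
  obtain ⟨δ, hδ, hδu⟩ := exists_between hu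
  obtain ⟨N, hN⟩ := eventually_atTop.1 <|
    eventually_lt_of_lt_liminf hδu (isBoundedUnder_of ⟨0, fun n => norm_nonneg (u n)⟩)
  have hne : ∀ n, u (n + N) ≠ 0 := fun n h => by
    linarith [norm_eq_zero.2 h, hN (n + N) (Nat.le_add_left N n)]
  refine ⟨fun n => ‖u (n + N)‖⁻¹ • u (n + N), fun n => norm_smul_inv_norm (hne n),
    (hw.comp_add N).smul_of_isBoundedUnder (isBoundedUnder_of ⟨δ⁻¹, fun n => ?_⟩)⟩
  rw [norm_inv, norm_norm]
  exact inv_anti₀ hδ (hN (n + N) (Nat.le_add_left N n)).le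

end WeakConv

lemma one_le_Dmod (X : Type*) [NormedAddCommGroup X] [NormedSpace ℝ X] (hD : 0 < Dmod X) :
    1 ≤ Dmod X := by
  rw [Dmod] at hD ⊢
  have hpos := mt Real.sSup_nonpos hD.not_ge
  push Not at hpos
  obtain ⟨_, ⟨y, b, -, hyw, rfl⟩, hd⟩ := hpos
  have hyw₀ : WeakConv (fun n => y n - b) 0 := by simpa using hyw.sub_const b
  obtain ⟨z, hz, hzw⟩ := hyw₀.exists_unit_weakConv_zero hd
  refine le_csSup (by_contra fun h => hD.ne' (Real.sSup_of_not_bddAbove h)) ⟨z, 0, hz, hzw, ?_⟩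
  simp [hz]

theorem stmt18_general (X : Type*) [NormedAddCommGroup X] [NormedSpace ℝ X]
    (x : ℕ → X) (a : X) (hw : WeakConv x 0)
    (ha : ‖a‖ ≥ 1)
    (hD : 0 < Dmod X) :
    Filter.liminf (fun n => ‖x n + a‖) atTop ≥ 1 / Dmod X :=
  calc 1 / Dmod X ≤ 1 := (div_le_one hD).2 (one_le_Dmod X hD)
    _ ≤ ‖a‖ := ha
    _ ≤ _ := by simpa using (hw.add_const a).norm_le_liminf_norm

theorem stmt18 (X : Type*) [NormedAddCommGroup X] [NormedSpace ℝ X] [CompleteSpace X]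
    (x : ℕ → X) (a : X) (hw : WeakConv x 0)
    (hx : Filter.liminf (fun n => ‖x n‖) atTop ≥ 1) (ha : ‖a‖ ≥ 1)
    (hD : 0 < Dmod X) :
    Filter.liminf (fun n => ‖x n + a‖) atTop ≥ 1 / Dmod X :=
  stmt18_general X x a hw ha hD
end
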